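/- Let M = U ×_f V be a warped product whose metric g is super generalized recurrent (SGK_n) with associated 1-forms (Π, Φ, Ψ, Θ). Then at every point x ∈ M at which the 1-form (df + f Π̄) is nonzero (i.e. f_e + f Π_e ≠ 0 at x for some e ∈ {1,…,p}), the fiber metric g̃ is of Roter type RT_{n−p} with (R̃; g̃, S̃): there exist real numbers N₁, N₂, N₃ such that R̃_{αβγδ} = N₁ (g̃∧g̃)_{αβγδ} − N₂ (g̃∧S̃)_{αβγδ} − N₃ (S̃∧S̃)_{αβγδ} at x for all indices α,β,γ,δ. -/

import Mathlib

noncomputable section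

/-- Partial derivative of a scalar function along the `j`-th coordinate direction. -/
def pd {k : ℕ} (F : (Fin k → ℝ) → ℝ) (j : Fin k) (x : Fin k → ℝ) : ℝ :=
  fderiv ℝ F x (Pi.single j 1)

/-- Christoffel symbols `Γ^i_{jl}` of a metric `h` with (pointwise) inverse `hinv`. -/
def Christoffel {k : ℕ} (h hinv : (Fin k → ℝ) → Fin k → Fin k → ℝ)
    (i j l : Fin k) (x : Fin k → ℝ) : ℝ :=
  (1 / 2) * ∑ r, hinv x i r *
    (pd (fun y => h y r l) j x + pd (fun y => h y j r) l x - pd (fun y => h y j l) r x)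

/-- The (0,4) Riemann-Christoffel curvature tensor of `h`. -/
def Riem {k : ℕ} (h hinv : (Fin k → ℝ) → Fin k → Fin k → ℝ)
    (x : Fin k → ℝ) (i j s l : Fin k) : ℝ :=
  ∑ r, h x i r *
    (pd (Christoffel h hinv r l j) s x - pd (Christoffel h hinv r s j) l x
      + (∑ t, Christoffel h hinv r s t x * Christoffel h hinv t l j x)
      - ∑ t, Christoffel h hinv r l t x * Christoffel h hinv t s j x)

/-- The Ricci tensor of `h`. -/
def Ric {k : ℕ} (h hinv : (Fin k → ℝ) → Fin k → Fin k → ℝ)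
    (x : Fin k → ℝ) (j l : Fin k) : ℝ :=
  ∑ i, ∑ s, hinv x i s * Riem h hinv x i j s l

/-- The scalar curvature of `h`. -/
def Scal {k : ℕ} (h hinv : (Fin k → ℝ) → Fin k → Fin k → ℝ) (x : Fin k → ℝ) : ℝ :=
  ∑ j, ∑ l, hinv x j l * Ric h hinv x j l

/-- Covariant derivative (w.r.t. the Levi-Civita connection of `h`) of a (0,4) tensor field. -/
def cov4 {k : ℕ} (h hinv : (Fin k → ℝ) → Fin k → Fin k → ℝ)
    (T : (Fin k → ℝ) → Fin k → Fin k → Fin k → Fin k → ℝ)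
    (x : Fin k → ℝ) (i j s l m : Fin k) : ℝ :=
  pd (fun y => T y i j s l) m x
    - (∑ r, Christoffel h hinv r m i x * T x r j s l)
    - (∑ r, Christoffel h hinv r m j x * T x i r s l)
    - (∑ r, Christoffel h hinv r m s x * T x i j r l)
    - ∑ r, Christoffel h hinv r m l x * T x i j s r

/-- Covariant derivative of a (0,2) tensor field. -/
def cov2 {k : ℕ} (h hinv : (Fin k → ℝ) → Fin k → Fin k → ℝ)
    (T : (Fin k → ℝ) → Fin k → Fin k → ℝ) (x : Fin k → ℝ) (i j m : Fin k) : ℝ :=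
  pd (fun y => T y i j) m x
    - (∑ r, Christoffel h hinv r m i x * T x r j)
    - ∑ r, Christoffel h hinv r m j x * T x i r

/-- Kulkarni-Nomizu product of two (0,2) tensors. -/
def KN {k : ℕ} (A E : (Fin k → ℝ) → Fin k → Fin k → ℝ)
    (x : Fin k → ℝ) (i j s l : Fin k) : ℝ :=
  A x i l * E x j s + A x j s * E x i l - A x i s * E x j l - A x j l * E x i s

/-- The Gaussian curvature tensor `G_{ijsl} = h_{il}h_{js} - h_{is}h_{jl}`. -/
def Gt {k : ℕ} (h : (Fin k → ℝ) → Fin k → Fin k → ℝ)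
    (x : Fin k → ℝ) (i j s l : Fin k) : ℝ :=
  h x i l * h x j s - h x i s * h x j l

/-- The conformal (Weyl) curvature tensor of a `k`-dimensional metric `h`. -/
def Weyl {k : ℕ} (h hinv : (Fin k → ℝ) → Fin k → Fin k → ℝ)
    (x : Fin k → ℝ) (i j s l : Fin k) : ℝ :=
  Riem h hinv x i j s l - (1 / ((k : ℝ) - 2)) * KN h (Ric h hinv) x i j s l
    + (Scal h hinv x / (2 * ((k : ℝ) - 1) * ((k : ℝ) - 2))) * KN h h x i j s l

/-- Recurrency condition at a point. -/
def Recur {k : ℕ} (h hinv : (Fin k → ℝ) → Fin k → Fin k → ℝ)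
    (piF : (Fin k → ℝ) → Fin k → ℝ) (x : Fin k → ℝ) : Prop :=
  ∀ i j s l m, cov4 h hinv (Riem h hinv) x i j s l m = piF x m * Riem h hinv x i j s l

/-- Hyper generalized recurrency condition at a point. -/
def HGK {k : ℕ} (h hinv : (Fin k → ℝ) → Fin k → Fin k → ℝ)
    (piF psiF : (Fin k → ℝ) → Fin k → ℝ) (x : Fin k → ℝ) : Prop :=
  ∀ i j s l m, cov4 h hinv (Riem h hinv) x i j s l m =
    piF x m * Riem h hinv x i j s l + psiF x m * KN h (Ric h hinv) x i j s l

/-- Weakly generalized recurrency condition at a point. -/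
def WGK {k : ℕ} (h hinv : (Fin k → ℝ) → Fin k → Fin k → ℝ)
    (piF phiF : (Fin k → ℝ) → Fin k → ℝ) (x : Fin k → ℝ) : Prop :=
  ∀ i j s l m, cov4 h hinv (Riem h hinv) x i j s l m =
    piF x m * Riem h hinv x i j s l
      + phiF x m * KN (Ric h hinv) (Ric h hinv) x i j s l

/-- Super generalized recurrency condition at a point. -/
def SGK {k : ℕ} (h hinv : (Fin k → ℝ) → Fin k → Fin k → ℝ)
    (piF phiF psiF thetaF : (Fin k → ℝ) → Fin k → ℝ) (x : Fin k → ℝ) : Prop :=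
  ∀ i j s l m, cov4 h hinv (Riem h hinv) x i j s l m =
    piF x m * Riem h hinv x i j s l
      + phiF x m * KN (Ric h hinv) (Ric h hinv) x i j s l
      + psiF x m * KN h (Ric h hinv) x i j s l
      + thetaF x m * KN h h x i j s l

/-- Base-point projection of a point of `M = U × V`. -/
def bpt {p q : ℕ} (z : Fin (p + q) → ℝ) : Fin p → ℝ := fun a => z (Fin.castAdd q a)

/-- Fiber-point projection of a point of `M = U × V`. -/
def fpt {p q : ℕ} (z : Fin (p + q) → ℝ) : Fin q → ℝ := fun a => z (Fin.natAdd p a)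

/-- Block-diagonal combination of a base tensor `A` and a fiber tensor `B` scaled by `c`. -/
def wPair {p q : ℕ} (A : (Fin p → ℝ) → Fin p → Fin p → ℝ)
    (B : (Fin q → ℝ) → Fin q → Fin q → ℝ) (c : (Fin p → ℝ) → ℝ)
    (z : Fin (p + q) → ℝ) (i j : Fin (p + q)) : ℝ :=
  Sum.elim
    (fun a => Sum.elim (fun b => A (bpt z) a b) (fun _ => (0 : ℝ)) (finSumFinEquiv.symm j))
    (fun a => Sum.elim (fun _ => (0 : ℝ)) (fun b => c (bpt z) * B (fpt z) a b)
      (finSumFinEquiv.symm j))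
    (finSumFinEquiv.symm i)

/-- The warped product metric `g = ḡ ⊕ f g̃`. -/
def wMet {p q : ℕ} (gbar : (Fin p → ℝ) → Fin p → Fin p → ℝ)
    (gtil : (Fin q → ℝ) → Fin q → Fin q → ℝ) (f : (Fin p → ℝ) → ℝ) :
    (Fin (p + q) → ℝ) → Fin (p + q) → Fin (p + q) → ℝ :=
  wPair gbar gtil f

/-- The inverse of the warped product metric. -/
def wMetInv {p q : ℕ} (gbinv : (Fin p → ℝ) → Fin p → Fin p → ℝ)
    (gtinv : (Fin q → ℝ) → Fin q → Fin q → ℝ) (f : (Fin p → ℝ) → ℝ) :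
    (Fin (p + q) → ℝ) → Fin (p + q) → Fin (p + q) → ℝ :=
  wPair gbinv gtinv fun x => (f x)⁻¹

/-- The set of points of `M = U × V` inside `ℝ^{p+q}`. -/
def Mset {p q : ℕ} (U : Set (Fin p → ℝ)) (V : Set (Fin q → ℝ)) : Set (Fin (p + q) → ℝ) :=
  {z | bpt z ∈ U ∧ fpt z ∈ V}

/-- The tensor `T_{ab} = -(1/(2f))(f_{a,b} - (1/(2f)) f_a f_b)`. -/
def Tten {p : ℕ} (gbar gbinv : (Fin p → ℝ) → Fin p → Fin p → ℝ) (f : (Fin p → ℝ) → ℝ)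
    (x : Fin p → ℝ) (a b : Fin p) : ℝ :=
  -(1 / (2 * f x)) *
    ((pd (fun y => pd f a y) b x - ∑ c, Christoffel gbar gbinv c b a x * pd f c x)
      - (1 / (2 * f x)) * pd f a x * pd f b x)

/-- `tr T = ḡ^{ab} T_{ab}`. -/
def trT {p : ℕ} (gbar gbinv : (Fin p → ℝ) → Fin p → Fin p → ℝ) (f : (Fin p → ℝ) → ℝ)
    (x : Fin p → ℝ) : ℝ :=
  ∑ a, ∑ b, gbinv x a b * Tten gbar gbinv f x a b

/-- `P = (1/(4f²)) ḡ^{ab} f_a f_b`. -/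
def Pw {p : ℕ} (gbinv : (Fin p → ℝ) → Fin p → Fin p → ℝ) (f : (Fin p → ℝ) → ℝ)
    (x : Fin p → ℝ) : ℝ :=
  (1 / (4 * f x ^ 2)) * ∑ a, ∑ b, gbinv x a b * pd f a x * pd f b x

/-- `Q = f((n-p-1)P - tr T)`, with `n - p = q`. -/
def Qw {p : ℕ} (q : ℕ) (gbar gbinv : (Fin p → ℝ) → Fin p → Fin p → ℝ)
    (f : (Fin p → ℝ) → ℝ) (x : Fin p → ℝ) : ℝ :=
  f x * (((q : ℝ) - 1) * Pw gbinv f x - trT gbar gbinv f x)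

/-!
On fiber indices the warped metric has curvature `R_{αβγδ} = f R̃_{αβγδ} + f² P G̃_{αβγδ}`, where
`G̃ = Gt g̃ = ½ g̃∧g̃`, and Ricci tensor `S_{αβ} = S̃_{αβ} + μ g̃_{αβ}` with `μ` depending on the base
point only (the mixed components `R_{aαbβ}` are multiples of `g̃_{αβ}`). The only Christoffel
symbols mixing a base direction `e` with fiber indices are `Γ^α_{eγ} = (f_e / 2f) δ^α_γ`, so the
covariant derivative of `R` in the direction `e` on fiber indices is `-f_e R̃ + c G̃` for a scalar
`c`. Substituting all this into the SGK condition with `m = e` and fiber indices `αβγδ` gives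
`(f_e + f Π_e) R̃ = N₁' g̃∧g̃ - N₂' g̃∧S̃ - Φ_e S̃∧S̃`, and one divides by `f_e + f Π_e ≠ 0`.
-/

open Finset

section PartialDerivative

variable {k : ℕ} {F G : (Fin k → ℝ) → ℝ} {z : Fin k → ℝ} {W : Set (Fin k → ℝ)}

lemma pd_add (hF : DifferentiableAt ℝ F z) (hG : DifferentiableAt ℝ G z) (j : Fin k) :
    pd (fun y => F y + G y) j z = pd F j z + pd G j z := by
  simp [pd, fderiv_fun_add hF hG]

lemma pd_mul (hF : DifferentiableAt ℝ F z) (hG : DifferentiableAt ℝ G z) (j : Fin k) :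
    pd (fun y => F y * G y) j z = pd F j z * G z + F z * pd G j z := by
  simp [pd, fderiv_fun_mul hF hG]
  ring

lemma pd_const (c : ℝ) (j : Fin k) (z : Fin k → ℝ) : pd (fun _ => c) j z = 0 := by
  simp [pd]

lemma pd_congr_of_eqOn (hW : IsOpen W) (hz : z ∈ W) (h : Set.EqOn F G W) (j : Fin k) :
    pd F j z = pd G j z := by
  rw [pd, pd, (Filter.eventuallyEq_of_mem (hW.mem_nhds hz) h).fderiv_eq]

lemma ContDiffOn.pd (hW : IsOpen W) (hF : ContDiffOn ℝ (⊤ : ℕ∞) F W) (j : Fin k) :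
    ContDiffOn ℝ (⊤ : ℕ∞) (_root_.pd F j) W := by
  have h : _root_.pd F j = ContinuousLinearMap.apply ℝ ℝ (Pi.single j 1) ∘ fderiv ℝ F := rfl
  rw [h]
  exact (ContinuousLinearMap.contDiff _).comp_contDiffOn
    ((contDiffOn_infty_iff_fderiv_of_isOpen hW).mp hF).2

lemma ContDiffOn.differentiableAt_of_isOpen (hW : IsOpen W) (hF : ContDiffOn ℝ (⊤ : ℕ∞) F W)
    (hz : z ∈ W) : DifferentiableAt ℝ F z :=
  (hF.contDiffAt (hW.mem_nhds hz)).differentiableAt (by simp)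

end PartialDerivative

section Projection

variable {p q : ℕ}

def bptL (p q : ℕ) : (Fin (p + q) → ℝ) →L[ℝ] (Fin p → ℝ) :=
  ContinuousLinearMap.pi fun a => ContinuousLinearMap.proj (Fin.castAdd q a)

def fptL (p q : ℕ) : (Fin (p + q) → ℝ) →L[ℝ] (Fin q → ℝ) :=
  ContinuousLinearMap.pi fun α => ContinuousLinearMap.proj (Fin.natAdd p α)

lemma isOpen_Mset {U : Set (Fin p → ℝ)} {V : Set (Fin q → ℝ)} (hU : IsOpen U)
    (hV : IsOpen V) : IsOpen (Mset U V) :=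
  (hU.preimage (bptL p q).continuous).inter (hV.preimage (fptL p q).continuous)

lemma bpt_single_castAdd (a : Fin p) :
    bpt (Pi.single (Fin.castAdd q a) (1 : ℝ)) = Pi.single a 1 := by
  funext b
  simp [bpt, Pi.single_apply, Fin.castAdd_inj]

lemma bpt_single_natAdd (α : Fin q) : bpt (Pi.single (Fin.natAdd p α) (1 : ℝ)) = 0 := by
  funext b
  have : Fin.castAdd q b ≠ Fin.natAdd p α := by simp [Fin.ext_iff]; omega
  simp [bpt, this]

lemma fpt_single_castAdd (a : Fin p) : fpt (Pi.single (Fin.castAdd q a) (1 : ℝ)) = 0 := by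
  funext β
  have : Fin.natAdd p β ≠ Fin.castAdd q a := by simp [Fin.ext_iff]; omega
  simp [fpt, this]

lemma fpt_single_natAdd (α : Fin q) :
    fpt (Pi.single (Fin.natAdd p α) (1 : ℝ)) = Pi.single α 1 := by
  funext β
  simp [fpt, Pi.single_apply, Fin.ext_iff]

variable {z : Fin (p + q) → ℝ} {A : (Fin p → ℝ) → ℝ} {B : (Fin q → ℝ) → ℝ}

lemma DifferentiableAt.comp_bpt (hA : DifferentiableAt ℝ A (bpt z)) :
    DifferentiableAt ℝ (fun y => A (bpt y)) z :=
  hA.comp z (bptL p q).differentiableAt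

lemma DifferentiableAt.comp_fpt (hB : DifferentiableAt ℝ B (fpt z)) :
    DifferentiableAt ℝ (fun y => B (fpt y)) z :=
  hB.comp z (fptL p q).differentiableAt

lemma pd_comp_bpt (hA : DifferentiableAt ℝ A (bpt z)) (j : Fin (p + q)) :
    pd (fun y => A (bpt y)) j z = fderiv ℝ A (bpt z) (bpt (Pi.single j 1)) := by
  rw [pd, show (fun y => A (bpt y)) = A ∘ bptL p q from rfl,
    fderiv_comp z (g := A) (f := bptL p q) hA (bptL p q).differentiableAt,
    ContinuousLinearMap.fderiv]
  rfl

lemma pd_comp_fpt (hB : DifferentiableAt ℝ B (fpt z)) (j : Fin (p + q)) :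
    pd (fun y => B (fpt y)) j z = fderiv ℝ B (fpt z) (fpt (Pi.single j 1)) := by
  rw [pd, show (fun y => B (fpt y)) = B ∘ fptL p q from rfl,
    fderiv_comp z (g := B) (f := fptL p q) hB (fptL p q).differentiableAt,
    ContinuousLinearMap.fderiv]
  rfl

lemma pd_comp_bpt_castAdd (hA : DifferentiableAt ℝ A (bpt z)) (a : Fin p) :
    pd (fun y => A (bpt y)) (Fin.castAdd q a) z = pd A a (bpt z) := by
  rw [pd_comp_bpt hA, bpt_single_castAdd, pd]

lemma pd_comp_bpt_natAdd (hA : DifferentiableAt ℝ A (bpt z)) (α : Fin q) :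
    pd (fun y => A (bpt y)) (Fin.natAdd p α) z = 0 := by
  rw [pd_comp_bpt hA, bpt_single_natAdd, map_zero]

lemma pd_comp_fpt_castAdd (hB : DifferentiableAt ℝ B (fpt z)) (a : Fin p) :
    pd (fun y => B (fpt y)) (Fin.castAdd q a) z = 0 := by
  rw [pd_comp_fpt hB, fpt_single_castAdd, map_zero]

lemma pd_comp_fpt_natAdd (hB : DifferentiableAt ℝ B (fpt z)) (α : Fin q) :
    pd (fun y => B (fpt y)) (Fin.natAdd p α) z = pd B α (fpt z) := by
  rw [pd_comp_fpt hB, fpt_single_natAdd, pd]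

lemma pd_mul_bpt_fpt_castAdd (hA : DifferentiableAt ℝ A (bpt z))
    (hB : DifferentiableAt ℝ B (fpt z)) (a : Fin p) :
    pd (fun y => A (bpt y) * B (fpt y)) (Fin.castAdd q a) z = pd A a (bpt z) * B (fpt z) := by
  rw [pd_mul hA.comp_bpt hB.comp_fpt, pd_comp_bpt_castAdd hA, pd_comp_fpt_castAdd hB, mul_zero,
    add_zero]

lemma pd_mul_bpt_fpt_natAdd (hA : DifferentiableAt ℝ A (bpt z))
    (hB : DifferentiableAt ℝ B (fpt z)) (α : Fin q) :
    pd (fun y => A (bpt y) * B (fpt y)) (Fin.natAdd p α) z = A (bpt z) * pd B α (fpt z) := by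
  rw [pd_mul hA.comp_bpt hB.comp_fpt, pd_comp_bpt_natAdd hA, pd_comp_fpt_natAdd hB, zero_mul,
    zero_add]

end Projection

section InverseMatrix

variable {k m : ℕ} {W : Set (Fin k → ℝ)} {A B : (Fin k → ℝ) → Fin m → Fin m → ℝ}

lemma Matrix.of_mul_of_eq_one_iff (A B : Fin m → Fin m → ℝ) :
    Matrix.of A * Matrix.of B = 1 ↔ ∀ a b, (∑ c, A a c * B c b) = if a = b then 1 else 0 := by
  simp only [← Matrix.ext_iff, Matrix.mul_apply, Matrix.one_apply, Matrix.of_apply]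

lemma contDiffOn_det {M : (Fin k → ℝ) → Matrix (Fin m) (Fin m) ℝ}
    (hM : ∀ i j, ContDiffOn ℝ (⊤ : ℕ∞) (fun x => M x i j) W) :
    ContDiffOn ℝ (⊤ : ℕ∞) (fun x => (M x).det) W := by
  simp only [Matrix.det_apply']
  exact ContDiffOn.sum fun σ _ => contDiffOn_const.mul (contDiffOn_prod fun i _ => hM (σ i) i)

/-- Cramer's rule makes the entries of an inverse rational functions of the entries. -/
lemma contDiffOn_of_mul_eq_one (hA : ∀ a b, ContDiffOn ℝ (⊤ : ℕ∞) (fun x => A x a b) W)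
    (hAB : ∀ x ∈ W, ∀ a b, (∑ c, A x a c * B x c b) = if a = b then (1 : ℝ) else 0)
    (a b : Fin m) :
    ContDiffOn ℝ (⊤ : ℕ∞) (fun x => B x a b) W := by
  have hinv : ∀ x ∈ W, (Matrix.of (A x))⁻¹ = Matrix.of (B x) := fun x hx =>
    Matrix.inv_eq_right_inv ((Matrix.of_mul_of_eq_one_iff _ _).mpr (hAB x hx))
  have hdet : ∀ x ∈ W, (Matrix.of (A x)).det ≠ 0 := fun x hx h0 => by
    have := congrArg Matrix.det ((Matrix.of_mul_of_eq_one_iff _ _).mpr (hAB x hx))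
    simp [h0] at this
  have hadj : ContDiffOn ℝ (⊤ : ℕ∞) (fun x => (Matrix.of (A x)).adjugate a b) W := by
    simp only [Matrix.adjugate_apply]
    refine contDiffOn_det fun i j => ?_
    by_cases hib : i = b
    · simpa [hib, Matrix.updateRow_apply] using contDiffOn_const
    · simpa [Matrix.updateRow_apply, hib] using hA i j
  refine ((contDiffOn_det (M := fun x => Matrix.of (A x)) hA).inv hdet).mul hadj
    |>.congr fun x hx => ?_
  change Matrix.of (B x) a b = _
  rw [← hinv x hx, Matrix.inv_def, Matrix.smul_apply, Ring.inverse_eq_inv, smul_eq_mul]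
  rfl

lemma sum_mul_eq_ite_comm {A B : Fin m → Fin m → ℝ}
    (hAB : ∀ a b, (∑ c, A a c * B c b) = if a = b then (1 : ℝ) else 0) (a b : Fin m) :
    (∑ c, B a c * A c b) = if a = b then (1 : ℝ) else 0 :=
  (Matrix.of_mul_of_eq_one_iff _ _).mp
    (mul_eq_one_comm.mp ((Matrix.of_mul_of_eq_one_iff _ _).mpr hAB)) a b

end InverseMatrix

section Contraction

variable {k : ℕ} {h hinv : (Fin k → ℝ) → Fin k → Fin k → ℝ} {y : Fin k → ℝ}

lemma sum_inv_mul_self (hsymm : ∀ i j, h y i j = h y j i)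
    (hh : ∀ i j, (∑ l, h y i l * hinv y l j) = if i = j then (1 : ℝ) else 0) :
    (∑ i, ∑ s, hinv y i s * h y i s) = k := by
  have hrow : ∀ i, (∑ s, hinv y i s * h y i s) = 1 := fun i => by
    simpa [hsymm i] using sum_mul_eq_ite_comm hh i i
  simp [hrow]

lemma sum_inv_mul_Gt (hsymm : ∀ i j, h y i j = h y j i)
    (hh : ∀ i j, (∑ l, h y i l * hinv y l j) = if i = j then (1 : ℝ) else 0) (j l : Fin k) :
    (∑ i, ∑ s, hinv y i s * Gt h y i j s l) = (1 - k) * h y j l := by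
  have hcol : ∀ i, (∑ s, hinv y i s * h y s j) = if i = j then 1 else 0 :=
    fun i => sum_mul_eq_ite_comm hh i j
  have hsplit : ∀ i, (∑ s, hinv y i s * Gt h y i j s l) =
      h y i l * (∑ s, hinv y i s * h y s j) - (∑ s, hinv y i s * h y i s) * h y j l := by
    intro i
    simp only [Gt, mul_sum, sum_mul, ← sum_sub_distrib, hsymm j]
    exact sum_congr rfl fun s _ => by ring
  simp only [hsplit, hcol, sum_sub_distrib, ← sum_mul, sum_inv_mul_self hsymm hh]
  simp
  ring

end Contraction

section BlockComponents

variable {p q : ℕ} (A : (Fin p → ℝ) → Fin p → Fin p → ℝ)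
  (B : (Fin q → ℝ) → Fin q → Fin q → ℝ) (c : (Fin p → ℝ) → ℝ) (z : Fin (p + q) → ℝ)

lemma wPair_castAdd_castAdd (a b : Fin p) :
    wPair A B c z (Fin.castAdd q a) (Fin.castAdd q b) = A (bpt z) a b := by
  simp [wPair]

lemma wPair_castAdd_natAdd (a : Fin p) (β : Fin q) :
    wPair A B c z (Fin.castAdd q a) (Fin.natAdd p β) = 0 := by
  simp [wPair]

lemma wPair_natAdd_castAdd (α : Fin q) (b : Fin p) :
    wPair A B c z (Fin.natAdd p α) (Fin.castAdd q b) = 0 := by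
  simp [wPair]

lemma wPair_natAdd_natAdd (α β : Fin q) :
    wPair A B c z (Fin.natAdd p α) (Fin.natAdd p β) = c (bpt z) * B (fpt z) α β := by
  simp [wPair]

end BlockComponents

structure WarpedProduct (p q : ℕ) where
  U : Set (Fin p → ℝ)
  V : Set (Fin q → ℝ)
  isOpen_U : IsOpen U
  isOpen_V : IsOpen V
  gbar : (Fin p → ℝ) → Fin p → Fin p → ℝ
  gbinv : (Fin p → ℝ) → Fin p → Fin p → ℝ
  gtil : (Fin q → ℝ) → Fin q → Fin q → ℝ
  gtinv : (Fin q → ℝ) → Fin q → Fin q → ℝ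
  f : (Fin p → ℝ) → ℝ
  contDiffOn_gbar : ∀ a b, ContDiffOn ℝ (⊤ : ℕ∞) (fun x => gbar x a b) U
  gbar_mul_gbinv : ∀ x ∈ U, ∀ a b,
    (∑ c, gbar x a c * gbinv x c b) = if a = b then (1 : ℝ) else 0
  contDiffOn_gtil : ∀ α β, ContDiffOn ℝ (⊤ : ℕ∞) (fun y => gtil y α β) V
  gtil_symm : ∀ y ∈ V, ∀ α β, gtil y α β = gtil y β α
  gtil_mul_gtinv : ∀ y ∈ V, ∀ α β,
    (∑ γ, gtil y α γ * gtinv y γ β) = if α = β then (1 : ℝ) else 0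
  contDiffOn_f : ContDiffOn ℝ (⊤ : ℕ∞) f U
  f_pos : ∀ x ∈ U, 0 < f x

namespace WarpedProduct

variable {p q : ℕ} (W : WarpedProduct p q) {z : Fin (p + q) → ℝ}

def g : (Fin (p + q) → ℝ) → Fin (p + q) → Fin (p + q) → ℝ := wMet W.gbar W.gtil W.f

def ginv : (Fin (p + q) → ℝ) → Fin (p + q) → Fin (p + q) → ℝ :=
  wMetInv W.gbinv W.gtinv W.f

def grad (x : Fin p → ℝ) (a : Fin p) : ℝ := ∑ c, W.gbinv x a c * pd W.f c x

lemma isOpen : IsOpen (Mset W.U W.V) := isOpen_Mset W.isOpen_U W.isOpen_V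

lemma f_ne_zero {x : Fin p → ℝ} (hx : x ∈ W.U) : W.f x ≠ 0 := (W.f_pos x hx).ne'

lemma gtinv_mul_gtil {y : Fin q → ℝ} (hy : y ∈ W.V) (α β : Fin q) :
    (∑ γ, W.gtinv y α γ * W.gtil y γ β) = if α = β then (1 : ℝ) else 0 :=
  sum_mul_eq_ite_comm (W.gtil_mul_gtinv y hy) α β

lemma sum_pd_f_mul_grad (x : Fin p → ℝ) (hx : x ∈ W.U) :
    (∑ c, pd W.f c x * W.grad x c) = 4 * W.f x ^ 2 * Pw W.gbinv W.f x := by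
  have := W.f_ne_zero hx
  simp only [grad, Pw, mul_sum]
  field_simp
  exact sum_congr rfl fun c _ => sum_congr rfl fun d _ => by ring

lemma contDiffOn_gbinv (a b : Fin p) : ContDiffOn ℝ (⊤ : ℕ∞) (fun x => W.gbinv x a b) W.U :=
  contDiffOn_of_mul_eq_one W.contDiffOn_gbar W.gbar_mul_gbinv a b

lemma contDiffOn_gtinv (α β : Fin q) :
    ContDiffOn ℝ (⊤ : ℕ∞) (fun y => W.gtinv y α β) W.V :=
  contDiffOn_of_mul_eq_one W.contDiffOn_gtil W.gtil_mul_gtinv α β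

lemma contDiffOn_grad (a : Fin p) : ContDiffOn ℝ (⊤ : ℕ∞) (fun x => W.grad x a) W.U :=
  ContDiffOn.sum fun c _ => (W.contDiffOn_gbinv a c).mul (W.contDiffOn_f.pd W.isOpen_U c)

lemma contDiffOn_f_sq_mul_Pw :
    ContDiffOn ℝ (⊤ : ℕ∞) (fun x => W.f x ^ 2 * Pw W.gbinv W.f x) W.U := by
  refine (W.contDiffOn_f.pow 2).mul ((contDiffOn_const.div (contDiffOn_const.mul
    (W.contDiffOn_f.pow 2)) fun x hx => ?_).mul (ContDiffOn.sum fun a _ => ContDiffOn.sum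
      fun b _ => ((W.contDiffOn_gbinv a b).mul (W.contDiffOn_f.pd W.isOpen_U a)).mul
        (W.contDiffOn_f.pd W.isOpen_U b)))
  have := W.f_ne_zero hx
  positivity

lemma contDiffOn_christoffel_gtil (α β γ : Fin q) :
    ContDiffOn ℝ (⊤ : ℕ∞) (Christoffel W.gtil W.gtinv α β γ) W.V := by
  have hd := fun α β => (W.contDiffOn_gtil α β).pd W.isOpen_V
  exact contDiffOn_const.mul (ContDiffOn.sum fun ε _ =>
    (W.contDiffOn_gtinv α ε).mul (((hd ε γ β).add (hd β ε γ)).sub (hd β γ ε)))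

lemma contDiffOn_riem_gtil (α β γ δ : Fin q) :
    ContDiffOn ℝ (⊤ : ℕ∞) (fun y => Riem W.gtil W.gtinv y α β γ δ) W.V := by
  have hΓ := W.contDiffOn_christoffel_gtil
  exact ContDiffOn.sum fun ε _ => (W.contDiffOn_gtil α ε).mul
    (((((hΓ ε δ β).pd W.isOpen_V γ).sub ((hΓ ε γ β).pd W.isOpen_V δ)).add
      (ContDiffOn.sum fun ζ _ => (hΓ ε γ ζ).mul (hΓ ζ δ β))).sub
      (ContDiffOn.sum fun ζ _ => (hΓ ε δ ζ).mul (hΓ ζ γ β)))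

section Differentiability

variable {x : Fin p → ℝ} {y : Fin q → ℝ}

lemma differentiableAt_f (hx : x ∈ W.U) : DifferentiableAt ℝ W.f x :=
  W.contDiffOn_f.differentiableAt_of_isOpen W.isOpen_U hx

lemma differentiableAt_gbar (hx : x ∈ W.U) (a b : Fin p) :
    DifferentiableAt ℝ (fun x => W.gbar x a b) x :=
  (W.contDiffOn_gbar a b).differentiableAt_of_isOpen W.isOpen_U hx

lemma differentiableAt_grad (hx : x ∈ W.U) (a : Fin p) :
    DifferentiableAt ℝ (fun x => W.grad x a) x :=
  (W.contDiffOn_grad a).differentiableAt_of_isOpen W.isOpen_U hx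

lemma differentiableAt_gtil (hy : y ∈ W.V) (α β : Fin q) :
    DifferentiableAt ℝ (fun y => W.gtil y α β) y :=
  (W.contDiffOn_gtil α β).differentiableAt_of_isOpen W.isOpen_V hy

end Differentiability

/-! In the lemma names below, the letters `b` (base) and `f` (fiber) record, index by index,
whether an index in `Fin (p + q)` is of the form `Fin.castAdd q a` or `Fin.natAdd p α`. -/

lemma g_bb (a b : Fin p) :
    W.g z (Fin.castAdd q a) (Fin.castAdd q b) = W.gbar (bpt z) a b :=
  wPair_castAdd_castAdd ..

lemma g_bf (a : Fin p) (β : Fin q) : W.g z (Fin.castAdd q a) (Fin.natAdd p β) = 0 :=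
  wPair_castAdd_natAdd ..

lemma g_fb (α : Fin q) (b : Fin p) : W.g z (Fin.natAdd p α) (Fin.castAdd q b) = 0 :=
  wPair_natAdd_castAdd ..

lemma g_ff (α β : Fin q) :
    W.g z (Fin.natAdd p α) (Fin.natAdd p β) = W.f (bpt z) * W.gtil (fpt z) α β :=
  wPair_natAdd_natAdd ..

lemma ginv_bb (a b : Fin p) :
    W.ginv z (Fin.castAdd q a) (Fin.castAdd q b) = W.gbinv (bpt z) a b :=
  wPair_castAdd_castAdd W.gbinv W.gtinv (fun x => (W.f x)⁻¹) z a b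

lemma ginv_bf (a : Fin p) (β : Fin q) : W.ginv z (Fin.castAdd q a) (Fin.natAdd p β) = 0 :=
  wPair_castAdd_natAdd W.gbinv W.gtinv (fun x => (W.f x)⁻¹) z a β

lemma ginv_fb (α : Fin q) (b : Fin p) : W.ginv z (Fin.natAdd p α) (Fin.castAdd q b) = 0 :=
  wPair_natAdd_castAdd W.gbinv W.gtinv (fun x => (W.f x)⁻¹) z α b

lemma ginv_ff (α β : Fin q) :
    W.ginv z (Fin.natAdd p α) (Fin.natAdd p β) = (W.f (bpt z))⁻¹ * W.gtinv (fpt z) α β :=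
  wPair_natAdd_natAdd W.gbinv W.gtinv (fun x => (W.f x)⁻¹) z α β

variable {W}

lemma pd_g_bb_castAdd (hz : z ∈ Mset W.U W.V) (a b e : Fin p) :
    pd (fun y => W.g y (Fin.castAdd q a) (Fin.castAdd q b)) (Fin.castAdd q e) z =
      pd (fun x => W.gbar x a b) e (bpt z) := by
  simp only [g_bb]
  exact pd_comp_bpt_castAdd (W.differentiableAt_gbar hz.1 a b) e

lemma pd_g_bb_natAdd (hz : z ∈ Mset W.U W.V) (a b : Fin p) (ε : Fin q) :
    pd (fun y => W.g y (Fin.castAdd q a) (Fin.castAdd q b)) (Fin.natAdd p ε) z = 0 := by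
  simp only [g_bb]
  exact pd_comp_bpt_natAdd (W.differentiableAt_gbar hz.1 a b) ε

@[simp] lemma pd_g_bf (a : Fin p) (β : Fin q) (j : Fin (p + q)) :
    pd (fun y => W.g y (Fin.castAdd q a) (Fin.natAdd p β)) j z = 0 := by
  simp only [g_bf, pd_const]

@[simp] lemma pd_g_fb (α : Fin q) (b : Fin p) (j : Fin (p + q)) :
    pd (fun y => W.g y (Fin.natAdd p α) (Fin.castAdd q b)) j z = 0 := by
  simp only [g_fb, pd_const]

lemma pd_g_ff_castAdd (hz : z ∈ Mset W.U W.V) (α β : Fin q) (e : Fin p) :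
    pd (fun y => W.g y (Fin.natAdd p α) (Fin.natAdd p β)) (Fin.castAdd q e) z =
      pd W.f e (bpt z) * W.gtil (fpt z) α β := by
  simp only [g_ff]
  exact pd_mul_bpt_fpt_castAdd (W.differentiableAt_f hz.1) (W.differentiableAt_gtil hz.2 α β) e

lemma pd_g_ff_natAdd (hz : z ∈ Mset W.U W.V) (α β γ : Fin q) :
    pd (fun y => W.g y (Fin.natAdd p α) (Fin.natAdd p β)) (Fin.natAdd p γ) z =
      W.f (bpt z) * pd (fun y => W.gtil y α β) γ (fpt z) := by
  simp only [g_ff]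
  exact pd_mul_bpt_fpt_natAdd (W.differentiableAt_f hz.1) (W.differentiableAt_gtil hz.2 α β) γ

lemma christoffel_castAdd (a : Fin p) (j l : Fin (p + q)) :
    Christoffel W.g W.ginv (Fin.castAdd q a) j l z = (1 / 2) * ∑ d, W.gbinv (bpt z) a d *
      (pd (fun y => W.g y (Fin.castAdd q d) l) j z + pd (fun y => W.g y j (Fin.castAdd q d)) l z
        - pd (fun y => W.g y j l) (Fin.castAdd q d) z) := by
  simp only [Christoffel, Fin.sum_univ_add, ginv_bb, ginv_bf, zero_mul, sum_const_zero, add_zero]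

lemma christoffel_natAdd (α : Fin q) (j l : Fin (p + q)) :
    Christoffel W.g W.ginv (Fin.natAdd p α) j l z =
      (1 / 2) * (W.f (bpt z))⁻¹ * ∑ ε, W.gtinv (fpt z) α ε *
        (pd (fun y => W.g y (Fin.natAdd p ε) l) j z + pd (fun y => W.g y j (Fin.natAdd p ε)) l z
          - pd (fun y => W.g y j l) (Fin.natAdd p ε) z) := by
  simp only [Christoffel, Fin.sum_univ_add, ginv_fb, ginv_ff, zero_mul, sum_const_zero, zero_add,
    mul_sum, mul_assoc]

lemma christoffel_bbb (hz : z ∈ Mset W.U W.V) (a b c : Fin p) :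
    Christoffel W.g W.ginv (Fin.castAdd q a) (Fin.castAdd q b) (Fin.castAdd q c) z =
      Christoffel W.gbar W.gbinv a b c (bpt z) := by
  rw [christoffel_castAdd]
  simp only [pd_g_bb_castAdd hz]
  rfl

lemma christoffel_bbf (hz : z ∈ Mset W.U W.V) (a b : Fin p) (γ : Fin q) :
    Christoffel W.g W.ginv (Fin.castAdd q a) (Fin.castAdd q b) (Fin.natAdd p γ) z = 0 := by
  simp [christoffel_castAdd, pd_g_bb_natAdd hz]

lemma christoffel_bfb (hz : z ∈ Mset W.U W.V) (a : Fin p) (β : Fin q) (c : Fin p) :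
    Christoffel W.g W.ginv (Fin.castAdd q a) (Fin.natAdd p β) (Fin.castAdd q c) z = 0 := by
  simp [christoffel_castAdd, pd_g_bb_natAdd hz]

lemma christoffel_bff (hz : z ∈ Mset W.U W.V) (a : Fin p) (β γ : Fin q) :
    Christoffel W.g W.ginv (Fin.castAdd q a) (Fin.natAdd p β) (Fin.natAdd p γ) z =
      -(1 / 2) * W.grad (bpt z) a * W.gtil (fpt z) β γ := by
  simp only [christoffel_castAdd, pd_g_bf, pd_g_fb, pd_g_ff_castAdd hz, grad]
  rw [mul_sum, mul_sum, sum_mul]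
  exact sum_congr rfl fun d _ => by ring

lemma christoffel_fbf (hz : z ∈ Mset W.U W.V) (α : Fin q) (b : Fin p) (γ : Fin q) :
    Christoffel W.g W.ginv (Fin.natAdd p α) (Fin.castAdd q b) (Fin.natAdd p γ) z =
      pd W.f b (bpt z) / (2 * W.f (bpt z)) * (if α = γ then 1 else 0) := by
  have := W.f_ne_zero hz.1
  simp only [christoffel_natAdd, pd_g_bf, pd_g_ff_castAdd hz, ← W.gtinv_mul_gtil hz.2 α γ,
    mul_sum]
  field_simp
  exact sum_congr rfl fun ε _ => by ring

lemma christoffel_ffb (hz : z ∈ Mset W.U W.V) (α β : Fin q) (c : Fin p) :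
    Christoffel W.g W.ginv (Fin.natAdd p α) (Fin.natAdd p β) (Fin.castAdd q c) z =
      pd W.f c (bpt z) / (2 * W.f (bpt z)) * (if α = β then 1 else 0) := by
  have := W.f_ne_zero hz.1
  simp only [christoffel_natAdd, pd_g_fb, pd_g_ff_castAdd hz, ← W.gtinv_mul_gtil hz.2 α β,
    mul_sum, W.gtil_symm _ hz.2 β]
  field_simp
  exact sum_congr rfl fun ε _ => by ring

lemma christoffel_fff (hz : z ∈ Mset W.U W.V) (α β γ : Fin q) :
    Christoffel W.g W.ginv (Fin.natAdd p α) (Fin.natAdd p β) (Fin.natAdd p γ) z =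
      Christoffel W.gtil W.gtinv α β γ (fpt z) := by
  have := W.f_ne_zero hz.1
  rw [christoffel_natAdd, Christoffel]
  simp only [pd_g_ff_natAdd hz, mul_sum]
  field_simp

lemma pd_christoffel_fff_natAdd (hz : z ∈ Mset W.U W.V) (ε δ β γ : Fin q) :
    pd (Christoffel W.g W.ginv (Fin.natAdd p ε) (Fin.natAdd p δ) (Fin.natAdd p β))
      (Fin.natAdd p γ) z = pd (Christoffel W.gtil W.gtinv ε δ β) γ (fpt z) := by
  rw [pd_congr_of_eqOn W.isOpen hz (fun y hy => christoffel_fff hy ε δ β)]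
  exact pd_comp_fpt_natAdd ((W.contDiffOn_christoffel_gtil ε δ β).differentiableAt_of_isOpen
    W.isOpen_V hz.2) γ

lemma pd_christoffel_bff_castAdd (hz : z ∈ Mset W.U W.V) (d : Fin p) (β α : Fin q) (b : Fin p) :
    pd (Christoffel W.g W.ginv (Fin.castAdd q d) (Fin.natAdd p β) (Fin.natAdd p α))
      (Fin.castAdd q b) z =
      -(1 / 2) * pd (fun x => W.grad x d) b (bpt z) * W.gtil (fpt z) β α := by
  rw [pd_congr_of_eqOn W.isOpen hz (fun y hy => christoffel_bff hy d β α)]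
  have hD := (W.differentiableAt_grad hz.1 d).const_mul (-(1 / 2) : ℝ)
  rw [pd_mul_bpt_fpt_castAdd (A := fun x => -(1 / 2) * W.grad x d) hD
    (W.differentiableAt_gtil hz.2 β α), pd, fderiv_const_mul (W.differentiableAt_grad hz.1 d)]
  rfl

lemma pd_christoffel_bbf_natAdd (hz : z ∈ Mset W.U W.V) (d b : Fin p) (α β : Fin q) :
    pd (Christoffel W.g W.ginv (Fin.castAdd q d) (Fin.castAdd q b) (Fin.natAdd p α))
      (Fin.natAdd p β) z = 0 := by
  rw [pd_congr_of_eqOn W.isOpen hz (fun y hy => christoffel_bbf hy d b α), pd_const]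

lemma sum_christoffel_mul_christoffel_ffff (hz : z ∈ Mset W.U W.V) (ε γ δ β : Fin q) :
    (∑ t, Christoffel W.g W.ginv (Fin.natAdd p ε) (Fin.natAdd p γ) t z *
      Christoffel W.g W.ginv t (Fin.natAdd p δ) (Fin.natAdd p β) z) =
    (∑ ζ, Christoffel W.gtil W.gtinv ε γ ζ (fpt z) *
        Christoffel W.gtil W.gtinv ζ δ β (fpt z)) -
      (if ε = γ then 1 else 0) * (W.f (bpt z) * Pw W.gbinv W.f (bpt z)) *
        W.gtil (fpt z) δ β := by
  have hf := W.f_ne_zero hz.1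
  have hbase : (∑ c,
      Christoffel W.g W.ginv (Fin.natAdd p ε) (Fin.natAdd p γ) (Fin.castAdd q c) z *
      Christoffel W.g W.ginv (Fin.castAdd q c) (Fin.natAdd p δ) (Fin.natAdd p β) z) =
      -((if ε = γ then 1 else 0) * W.gtil (fpt z) δ β / (4 * W.f (bpt z))) *
        ∑ c, pd W.f c (bpt z) * W.grad (bpt z) c := by
    rw [mul_sum]
    refine sum_congr rfl fun c _ => ?_
    rw [christoffel_ffb hz, christoffel_bff hz]
    field_simp
    ring
  rw [Fin.sum_univ_add, hbase, W.sum_pd_f_mul_grad _ hz.1]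
  simp only [christoffel_fff hz]
  field_simp
  ring

lemma riem_ffff (hz : z ∈ Mset W.U W.V) (α β γ δ : Fin q) :
    Riem W.g W.ginv z (Fin.natAdd p α) (Fin.natAdd p β) (Fin.natAdd p γ) (Fin.natAdd p δ) =
      W.f (bpt z) * Riem W.gtil W.gtinv (fpt z) α β γ δ +
        W.f (bpt z) ^ 2 * Pw W.gbinv W.f (bpt z) * Gt W.gtil (fpt z) α β γ δ := by
  have hGt : Gt W.gtil (fpt z) α β γ δ = ∑ ε, W.gtil (fpt z) α ε *
      ((if ε = δ then W.gtil (fpt z) γ β else 0) -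
        if ε = γ then W.gtil (fpt z) δ β else 0) := by
    simp [Gt, mul_sub, sum_sub_distrib, W.gtil_symm _ hz.2 β]
  rw [Riem, Fin.sum_univ_add]
  simp only [g_fb, zero_mul, sum_const_zero, zero_add, g_ff, pd_christoffel_fff_natAdd hz,
    sum_christoffel_mul_christoffel_ffff hz]
  rw [hGt, Riem, mul_sum, mul_sum, ← sum_add_distrib]
  exact sum_congr rfl fun ε _ => by split_ifs <;> ring

variable (W) in
def mixedCoeff (x : Fin p → ℝ) (a b : Fin p) : ℝ :=
  ∑ d, W.gbar x a d * (-(1 / 2) * pd (fun x => W.grad x d) b x -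
    (1 / 2) * (∑ c, Christoffel W.gbar W.gbinv d b c x * W.grad x c) +
      pd W.f b x * W.grad x d / (4 * W.f x))

lemma riem_bfbf (hz : z ∈ Mset W.U W.V) (a : Fin p) (α : Fin q) (b : Fin p) (β : Fin q) :
    Riem W.g W.ginv z (Fin.castAdd q a) (Fin.natAdd p α) (Fin.castAdd q b) (Fin.natAdd p β) =
      W.mixedCoeff (bpt z) a b * W.gtil (fpt z) α β := by
  have hf := W.f_ne_zero hz.1
  rw [Riem, Fin.sum_univ_add]
  simp only [g_bf, zero_mul, sum_const_zero, add_zero, g_bb, pd_christoffel_bff_castAdd hz,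
    pd_christoffel_bbf_natAdd hz, Fin.sum_univ_add, christoffel_bbb hz, christoffel_bff hz,
    christoffel_bbf hz, christoffel_bfb hz, christoffel_fbf hz, zero_mul, mul_zero]
  rw [mixedCoeff, sum_mul]
  refine sum_congr rfl fun d _ => ?_
  simp only [mul_ite, mul_one, mul_zero, sum_ite_eq', mem_univ, if_true,
    W.gtil_symm _ hz.2 β]
  have hsum : (∑ c, Christoffel W.gbar W.gbinv d b c (bpt z) *
      (-(1 / 2) * W.grad (bpt z) c * W.gtil (fpt z) α β)) =
      -(1 / 2) * (∑ c, Christoffel W.gbar W.gbinv d b c (bpt z) * W.grad (bpt z) c) *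
        W.gtil (fpt z) α β := by
    rw [mul_sum, sum_mul]
    exact sum_congr rfl fun c _ => by ring
  rw [hsum]
  field_simp
  ring

variable (W) in
def ricciShift (x : Fin p → ℝ) : ℝ :=
  (∑ a, ∑ b, W.gbinv x a b * W.mixedCoeff x a b) - (q - 1) * (W.f x * Pw W.gbinv W.f x)

lemma ric_ff (hz : z ∈ Mset W.U W.V) (α β : Fin q) :
    Ric W.g W.ginv z (Fin.natAdd p α) (Fin.natAdd p β) =
      Ric W.gtil W.gtinv (fpt z) α β + W.ricciShift (bpt z) * W.gtil (fpt z) α β := by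
  have hf := W.f_ne_zero hz.1
  have hbase : (∑ a, ∑ s, W.ginv z (Fin.castAdd q a) s *
      Riem W.g W.ginv z (Fin.castAdd q a) (Fin.natAdd p α) s (Fin.natAdd p β)) =
      (∑ a, ∑ b, W.gbinv (bpt z) a b * W.mixedCoeff (bpt z) a b) * W.gtil (fpt z) α β := by
    simp only [Fin.sum_univ_add, ginv_bb, ginv_bf, zero_mul, sum_const_zero, add_zero,
      riem_bfbf hz, sum_mul]
    exact sum_congr rfl fun a _ => sum_congr rfl fun b _ => by ring
  have hfiber : (∑ ε, ∑ s, W.ginv z (Fin.natAdd p ε) s *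
      Riem W.g W.ginv z (Fin.natAdd p ε) (Fin.natAdd p α) s (Fin.natAdd p β)) =
      Ric W.gtil W.gtinv (fpt z) α β +
        W.f (bpt z) * Pw W.gbinv W.f (bpt z) * ((1 - q) * W.gtil (fpt z) α β) := by
    rw [← sum_inv_mul_Gt (W.gtil_symm _ hz.2) (W.gtil_mul_gtinv _ hz.2), Ric, mul_sum,
      ← sum_add_distrib]
    refine sum_congr rfl fun ε _ => ?_
    simp only [Fin.sum_univ_add, ginv_fb, zero_mul, sum_const_zero, zero_add, ginv_ff,
      riem_ffff hz, mul_sum, ← sum_add_distrib]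
    exact sum_congr rfl fun ζ _ => by field_simp
  rw [Ric, Fin.sum_univ_add, hbase, hfiber, ricciShift]
  ring

lemma sum_christoffel_castAdd_natAdd_mul (hz : z ∈ Mset W.U W.V) (e : Fin p) (ν : Fin q)
    (T : Fin (p + q) → ℝ) :
    (∑ r, Christoffel W.g W.ginv r (Fin.castAdd q e) (Fin.natAdd p ν) z * T r) =
      pd W.f e (bpt z) / (2 * W.f (bpt z)) * T (Fin.natAdd p ν) := by
  simp [Fin.sum_univ_add, christoffel_bbf hz, christoffel_fbf hz]

lemma pd_riem_ffff_castAdd (hz : z ∈ Mset W.U W.V) (e : Fin p) (α β γ δ : Fin q) :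
    pd (fun y => Riem W.g W.ginv y (Fin.natAdd p α) (Fin.natAdd p β) (Fin.natAdd p γ)
      (Fin.natAdd p δ)) (Fin.castAdd q e) z =
      pd W.f e (bpt z) * Riem W.gtil W.gtinv (fpt z) α β γ δ +
        pd (fun x => W.f x ^ 2 * Pw W.gbinv W.f x) e (bpt z) * Gt W.gtil (fpt z) α β γ δ := by
  rw [pd_congr_of_eqOn W.isOpen hz (fun y hy => riem_ffff hy α β γ δ)]
  have hf := W.differentiableAt_f hz.1
  have hP := W.contDiffOn_f_sq_mul_Pw.differentiableAt_of_isOpen W.isOpen_U hz.1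
  have hR := (W.contDiffOn_riem_gtil α β γ δ).differentiableAt_of_isOpen W.isOpen_V hz.2
  have hg := W.differentiableAt_gtil hz.2
  have hG : DifferentiableAt ℝ (fun y => Gt W.gtil y α β γ δ) (fpt z) :=
    ((hg α δ).mul (hg β γ)).sub ((hg α γ).mul (hg β δ))
  rw [pd_add (hf.comp_bpt.fun_mul hR.comp_fpt) (hP.comp_bpt.fun_mul hG.comp_fpt),
    pd_mul_bpt_fpt_castAdd hf hR, pd_mul_bpt_fpt_castAdd (A := fun x => W.f x ^ 2 * _) hP hG]

lemma cov4_riem_ffff_castAdd (hz : z ∈ Mset W.U W.V) (e : Fin p) (α β γ δ : Fin q) :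
    cov4 W.g W.ginv (Riem W.g W.ginv) z
        (Fin.natAdd p α) (Fin.natAdd p β) (Fin.natAdd p γ) (Fin.natAdd p δ) (Fin.castAdd q e) =
      -pd W.f e (bpt z) * Riem W.gtil W.gtinv (fpt z) α β γ δ +
        (pd (fun x => W.f x ^ 2 * Pw W.gbinv W.f x) e (bpt z) -
          2 * pd W.f e (bpt z) * (W.f (bpt z) * Pw W.gbinv W.f (bpt z))) *
          Gt W.gtil (fpt z) α β γ δ := by
  have hf := W.f_ne_zero hz.1
  simp only [cov4, pd_riem_ffff_castAdd hz, sum_christoffel_castAdd_natAdd_mul hz, riem_ffff hz]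
  field_simp
  ring

lemma mul_riem_gtil_of_SGK (hz : z ∈ Mset W.U W.V)
    {piF phiF psiF thetaF : (Fin (p + q) → ℝ) → Fin (p + q) → ℝ}
    (hsgk : SGK W.g W.ginv piF phiF psiF thetaF z) (e : Fin p) (α β γ δ : Fin q) :
    (pd W.f e (bpt z) + W.f (bpt z) * piF z (Fin.castAdd q e)) *
        Riem W.gtil W.gtinv (fpt z) α β γ δ =
      ((pd (fun x => W.f x ^ 2 * Pw W.gbinv W.f x) e (bpt z) -
            2 * pd W.f e (bpt z) * (W.f (bpt z) * Pw W.gbinv W.f (bpt z)) -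
            piF z (Fin.castAdd q e) * W.f (bpt z) ^ 2 * Pw W.gbinv W.f (bpt z)) / 2 -
          phiF z (Fin.castAdd q e) * W.ricciShift (bpt z) ^ 2 -
          psiF z (Fin.castAdd q e) * W.f (bpt z) * W.ricciShift (bpt z) -
          thetaF z (Fin.castAdd q e) * W.f (bpt z) ^ 2) * KN W.gtil W.gtil (fpt z) α β γ δ -
        (2 * W.ricciShift (bpt z) * phiF z (Fin.castAdd q e) +
          W.f (bpt z) * psiF z (Fin.castAdd q e)) *
          KN W.gtil (Ric W.gtil W.gtinv) (fpt z) α β γ δ -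
        phiF z (Fin.castAdd q e) *
          KN (Ric W.gtil W.gtinv) (Ric W.gtil W.gtinv) (fpt z) α β γ δ := by
  have h := hsgk (Fin.natAdd p α) (Fin.natAdd p β) (Fin.natAdd p γ) (Fin.natAdd p δ)
    (Fin.castAdd q e)
  simp only [cov4_riem_ffff_castAdd hz, riem_ffff hz, KN, Gt, ric_ff hz, g_ff] at h ⊢
  linear_combination -h

end WarpedProduct

theorem fiber_of_warped_SGK_is_RT_general
    {p q : ℕ}
    (U : Set (Fin p → ℝ)) (V : Set (Fin q → ℝ))
    (hU : IsOpen U) (hV : IsOpen V)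
    (gbar gbinv : (Fin p → ℝ) → Fin p → Fin p → ℝ)
    (gtil gtinv : (Fin q → ℝ) → Fin q → Fin q → ℝ)
    (f : (Fin p → ℝ) → ℝ)
    (hgb : ∀ a b, ContDiffOn ℝ (⊤ : ℕ∞) (fun x => gbar x a b) U)
    (hgbi : ∀ x ∈ U, ∀ a b, (∑ c, gbar x a c * gbinv x c b) = if a = b then (1 : ℝ) else 0)
    (hgt : ∀ a b, ContDiffOn ℝ (⊤ : ℕ∞) (fun y => gtil y a b) V)
    (hgts : ∀ y ∈ V, ∀ a b, gtil y a b = gtil y b a)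
    (hgti : ∀ y ∈ V, ∀ a b, (∑ c, gtil y a c * gtinv y c b) = if a = b then (1 : ℝ) else 0)
    (hf : ContDiffOn ℝ (⊤ : ℕ∞) f U)
    (hfpos : ∀ x ∈ U, 0 < f x)
    (piF phiF psiF thetaF : (Fin (p + q) → ℝ) → Fin (p + q) → ℝ)
    (hsgk : ∀ z ∈ Mset U V, SGK (wMet gbar gtil f) (wMetInv gbinv gtinv f) piF phiF psiF thetaF z) :
    ∀ z ∈ Mset U V, (∃ e : Fin p, pd f e (bpt z) + f (bpt z) * piF z (Fin.castAdd q e) ≠ 0) →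
      ∃ N₁ N₂ N₃ : ℝ, ∀ α β γ δ : Fin q,
        Riem gtil gtinv (fpt z) α β γ δ =
          N₁ * KN gtil gtil (fpt z) α β γ δ - N₂ * KN gtil (Ric gtil gtinv) (fpt z) α β γ δ - N₃ * KN (Ric gtil gtinv) (Ric gtil gtinv) (fpt z) α β γ δ := by
  rintro z hz ⟨e, he⟩
  let W : WarpedProduct p q :=
    ⟨U, V, hU, hV, gbar, gbinv, gtil, gtinv, f, hgb, hgbi, hgt, hgts, hgti, hf, hfpos⟩
  have hrel := WarpedProduct.mul_riem_gtil_of_SGK (W := W) hz (hsgk z hz) e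
  have hdiv : ∀ {c R A B C X Y Z : ℝ}, c ≠ 0 → c * R = A * X - B * Y - C * Z →
      R = A / c * X - B / c * Y - C / c * Z := fun hc h => by
    field_simp
    linarith
  exact ⟨_, _, _, fun α β γ δ => hdiv he (hrel α β γ δ)⟩

/-- Corollary 4.1(iv): the fiber of a warped product SGK manifold is of Roter type
wherever df + f Π̄ is nonzero. -/
theorem fiber_of_warped_SGK_is_RT
    {p q : ℕ} (hp : 1 ≤ p) (hq : 1 ≤ q)
    (U : Set (Fin p → ℝ)) (V : Set (Fin q → ℝ))
    (hU : IsOpen U) (hV : IsOpen V)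
    (gbar gbinv : (Fin p → ℝ) → Fin p → Fin p → ℝ)
    (gtil gtinv : (Fin q → ℝ) → Fin q → Fin q → ℝ)
    (f : (Fin p → ℝ) → ℝ)
    (hgb : ∀ a b, ContDiffOn ℝ (⊤ : ℕ∞) (fun x => gbar x a b) U)
    (hgbs : ∀ x ∈ U, ∀ a b, gbar x a b = gbar x b a)
    (hgbi : ∀ x ∈ U, ∀ a b, (∑ c, gbar x a c * gbinv x c b) = if a = b then (1 : ℝ) else 0)
    (hgt : ∀ a b, ContDiffOn ℝ (⊤ : ℕ∞) (fun y => gtil y a b) V)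
    (hgts : ∀ y ∈ V, ∀ a b, gtil y a b = gtil y b a)
    (hgti : ∀ y ∈ V, ∀ a b, (∑ c, gtil y a c * gtinv y c b) = if a = b then (1 : ℝ) else 0)
    (hf : ContDiffOn ℝ (⊤ : ℕ∞) f U)
    (hfpos : ∀ x ∈ U, 0 < f x)
    (piF phiF psiF thetaF : (Fin (p + q) → ℝ) → Fin (p + q) → ℝ)
    (hpiF : ∀ m, ContDiffOn ℝ (⊤ : ℕ∞) (fun z => piF z m) (Mset U V))
    (hphiF : ∀ m, ContDiffOn ℝ (⊤ : ℕ∞) (fun z => phiF z m) (Mset U V))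
    (hpsiF : ∀ m, ContDiffOn ℝ (⊤ : ℕ∞) (fun z => psiF z m) (Mset U V))
    (hthetaF : ∀ m, ContDiffOn ℝ (⊤ : ℕ∞) (fun z => thetaF z m) (Mset U V))
    (hsgk : ∀ z ∈ Mset U V, SGK (wMet gbar gtil f) (wMetInv gbinv gtinv f) piF phiF psiF thetaF z) :
    ∀ z ∈ Mset U V, (∃ e : Fin p, pd f e (bpt z) + f (bpt z) * piF z (Fin.castAdd q e) ≠ 0) →
      ∃ N₁ N₂ N₃ : ℝ, ∀ α β γ δ : Fin q,
        Riem gtil gtinv (fpt z) α β γ δ =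
          N₁ * KN gtil gtil (fpt z) α β γ δ - N₂ * KN gtil (Ric gtil gtinv) (fpt z) α β γ δ - N₃ * KN (Ric gtil gtinv) (Ric gtil gtinv) (fpt z) α β γ δ :=
  fiber_of_warped_SGK_is_RT_general U V hU hV gbar gbinv gtil gtinv f hgb hgbi hgt hgts hgti hf
    hfpos piF phiF psiF thetaF hsgk
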